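/- Let 0 < a < b < c be real numbers and let k, l ∈ ℝ with k > 0 and l < 0. Then the square hyperbolae S_l(aI, bI) and S_k(bI, cI) are disjoint: there is no w ∈ H² with d(w,aI)² − d(w,bI)² = l and d(w,bI)² − d(w,cI)² = k. -/

import Mathlib

/-!
Since `cosh d(w, aI) = (|w|² + a²) / (2a Im w)`, a point `w` is closer to `aI` than to `bI`
(`a < b`) exactly when `|w|² < ab`. A point of `S_l(aI, bI)` with `l < 0` is closer to `aI`, so
`|w|² < ab`; a point of `S_k(bI, cI)` with `k > 0` is closer to `cI`, so `|w|² > bc > ab`.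
-/

open UpperHalfPlane

noncomputable section

/-- The point of the upper half-plane with complex coordinate `a·i`, for `a > 0`. -/
def ptI (a : ℝ) (ha : 0 < a) : UpperHalfPlane := ⟨a * Complex.I, by simpa using ha⟩

lemma ptI_re (a : ℝ) (ha : 0 < a) : (ptI a ha).re = 0 := by simp [ptI, UpperHalfPlane.re]

lemma ptI_im (a : ℝ) (ha : 0 < a) : (ptI a ha).im = a := by simp [ptI, UpperHalfPlane.im]

lemma cosh_dist_ptI (w : ℍ) (a : ℝ) (ha : 0 < a) :
    Real.cosh (dist w (ptI a ha)) = (Complex.normSq w + a ^ 2) / (2 * a * w.im) := by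
  rw [cosh_dist', ptI_re, ptI_im, Complex.normSq_apply, coe_re, coe_im]
  ring_nf

lemma dist_ptI_lt_dist_ptI_iff (w : ℍ) {a b : ℝ} (ha : 0 < a) (hb : 0 < b) :
    dist w (ptI a ha) < dist w (ptI b hb) ↔ (b - a) * (Complex.normSq w - a * b) < 0 := by
  rw [← Real.cosh_strictMonoOn.lt_iff_lt dist_nonneg dist_nonneg, cosh_dist_ptI, cosh_dist_ptI,
    div_lt_div_iff₀ (by positivity) (by positivity)]
  have hy := w.im_pos
  constructor <;> intro h <;> nlinarith

/-- For `0 < a < b < c`, `k > 0` and `l < 0`, the square hyperbolae `S_l(aI,bI)` and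
`S_k(bI,cI)` are disjoint. -/
theorem squareHyperbolae_disjoint (a b c k l : ℝ) (ha : 0 < a) (hab : a < b)
    (hbc : b < c) (hk : 0 < k) (hl : l < 0) :
    ¬ ∃ w : UpperHalfPlane,
        dist w (ptI a ha) ^ 2 - dist w (ptI b (ha.trans hab)) ^ 2 = l ∧
        dist w (ptI b (ha.trans hab)) ^ 2 - dist w (ptI c ((ha.trans hab).trans hbc)) ^ 2 = k := by
  rintro ⟨w, hwl, hwk⟩
  have hb : 0 < b := ha.trans hab
  have hc : 0 < c := hb.trans hbc
  have hcloser_a : dist w (ptI a ha) < dist w (ptI b hb) :=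
    lt_of_pow_lt_pow_left₀ 2 dist_nonneg (by linarith)
  have hcloser_c : dist w (ptI c hc) < dist w (ptI b hb) :=
    lt_of_pow_lt_pow_left₀ 2 dist_nonneg (by linarith)
  have hinner : Complex.normSq w < a * b := by
    have := neg_of_mul_neg_right ((dist_ptI_lt_dist_ptI_iff w ha hb).1 hcloser_a)
      (sub_nonneg.2 hab.le)
    linarith
  have houter : c * b < Complex.normSq w := by
    have := pos_of_mul_neg_right ((dist_ptI_lt_dist_ptI_iff w hc hb).1 hcloser_c)
      (sub_nonpos.2 hbc.le)
    linarith
  linarith [mul_lt_mul_of_pos_right (hab.trans hbc) hb]
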